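/- arXiv:2505.12637 — 6 statements merged into one kernel-verified Lean document; each statement's English description precedes it below -/
import Mathlib

section
/- Let A be an Artin algebra with Jacobson radical J, and let P_• = (P_i, f_i : P_i → P_{i−1})_{i∈ℤ} be a minimal complex of finitely generated projective left A-modules (minimal meaning Im f_i ⊆ J·P_{i−1} for all i) such that H_i(P_•) = 0 for all i ≠ 0, −1 and the A-dual complex P_•* = Hom_A(P_•, A) is acyclic. Then M := Coker f₁ is a reduced bi-semi-Gorenstein-projective module, i.e. both M and the right A-module M* are semi-Gorenstein-projective and M has no nonzero projective direct summand; moreover M* ≅ Coker(f_{−1}* : P_{−1}* → P_{−2}*) and M** ≅ Ker f_{−1}. -/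
universe u

open Function

section Preamble

variable (A : Type u) [Ring A]

/-- The `A`-dual map `Hom(N,A) → Hom(M,A)` of `f : M →ₗ[A] N`; it is linear
for the right `A`-module (= left `Aᵐᵒᵖ`-module) structures on the duals. -/
def dualMapRight {M N : Type u} [AddCommGroup M] [Module A M] [AddCommGroup N] [Module A N]
    (f : M →ₗ[A] N) : (N →ₗ[A] A) →ₗ[Aᵐᵒᵖ] (M →ₗ[A] A) where
  toFun g := g.comp f
  map_add' g₁ g₂ := by ext m; rfl
  map_smul' a g := by ext m; rfl

/-- The evaluation map `φ_M : M → M**`. -/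
def evalBidual (M : Type u) [AddCommGroup M] [Module A M] :
    M →ₗ[A] ((M →ₗ[A] A) →ₗ[Aᵐᵒᵖ] A) where
  toFun m :=
    { toFun := fun f => f m
      map_add' := fun f g => rfl
      map_smul' := fun a f => rfl }
  map_add' m₁ m₂ := by ext f; exact f.map_add m₁ m₂
  map_smul' a m := by ext f; exact f.map_smul a m

/-- `M` is torsionless if `φ_M` is injective. -/
def IsTorsionlessMod (M : Type u) [AddCommGroup M] [Module A M] : Prop :=
  Function.Injective (evalBidual A M)

/-- `M` is reflexive if `φ_M` is bijective. -/
def IsReflexiveMod (M : Type u) [AddCommGroup M] [Module A M] : Prop :=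
  Function.Bijective (evalBidual A M)

/-- A resolution of `M` by finitely generated projective modules. -/
structure ProjRes (M : Type u) [AddCommGroup M] [Module A M] where
  P : ℕ → Type u
  [acg : ∀ n, AddCommGroup (P n)]
  [mod : ∀ n, Module A (P n)]
  proj : ∀ n, Module.Projective A (P n)
  fin : ∀ n, Module.Finite A (P n)
  d : ∀ n, P (n + 1) →ₗ[A] P n
  aug : P 0 →ₗ[A] M
  surj : Function.Surjective aug
  exact0 : LinearMap.range (d 0) = LinearMap.ker aug
  exact : ∀ n, LinearMap.range (d (n + 1)) = LinearMap.ker (d n)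

attribute [instance] ProjRes.acg ProjRes.mod

/-- `Ext^i_A(M, A) = 0` for all `i ≥ 1`:  for every (equivalently, some) projective
resolution of `M`, the `A`-dual complex is exact in all degrees `≥ 1`. -/
def IsSemiGorensteinProj (M : Type u) [AddCommGroup M] [Module A M] : Prop :=
  ∀ R : ProjRes A M, ∀ n : ℕ,
    LinearMap.range (dualMapRight A (R.d n)) = LinearMap.ker (dualMapRight A (R.d (n + 1)))

/-- `Ext^1_A(M, A') = 0` where `A'` is the ring itself (degree-one vanishing only). -/
def ExtOneToRingVanishes (M : Type u) [AddCommGroup M] [Module A M] : Prop :=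
  ∀ R : ProjRes A M,
    LinearMap.range (dualMapRight A (R.d 0)) = LinearMap.ker (dualMapRight A (R.d 1))

/-- `Ext^{m+1}_A(M, N) ≠ 0`, expressed via projective resolutions: there is a cocycle
which is not a coboundary. -/
def ExtNonzero (M : Type u) [AddCommGroup M] [Module A M]
    (N : Type u) [AddCommGroup N] [Module A N] (m : ℕ) : Prop :=
  ∀ R : ProjRes A M, ∃ g : R.P (m + 1) →ₗ[A] N,
    g.comp (R.d (m + 1)) = 0 ∧ ∀ h : R.P m →ₗ[A] N, h.comp (R.d m) ≠ g

/-- A complete resolution: a doubly infinite exact sequence of finitely generated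
projective modules whose `A`-dual complex is also exact. -/
structure CompleteRes where
  P : ℤ → Type u
  [acg : ∀ n, AddCommGroup (P n)]
  [mod : ∀ n, Module A (P n)]
  proj : ∀ n, Module.Projective A (P n)
  fin : ∀ n, Module.Finite A (P n)
  d : ∀ n : ℤ, P n →ₗ[A] P (n + 1)
  exact : ∀ n, LinearMap.range (d n) = LinearMap.ker (d (n + 1))
  dual_exact : ∀ n,
    LinearMap.range (dualMapRight A (d (n + 1))) = LinearMap.ker (dualMapRight A (d n))

attribute [instance] CompleteRes.acg CompleteRes.mod

/-- `M` is Gorenstein-projective: it is the image of a differential in a complete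
resolution. -/
def IsGorensteinProj (M : Type u) [AddCommGroup M] [Module A M] : Prop :=
  ∃ C : CompleteRes A, Nonempty (M ≃ₗ[A] LinearMap.range (C.d 0))

end Preamble

/-- The submodule `J·P` where `J` is the Jacobson radical of `A`. -/
def radSMul (A : Type u) [Ring A] (P : Type u) [AddCommGroup P] [Module A P] :
    Submodule A P :=
  Submodule.span A {x | ∃ a ∈ (⊥ : Ideal A).jacobson, ∃ p : P, a • p = x}


/-!
Truncating `P_•` at degree `0` gives a projective resolution of `M` whose dual is exact; by the
comparison theorem this exactness does not depend on the resolution, so `M` is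
semi-Gorenstein-projective. Dualising the cokernel, `M* = Ker f₁* = Im f₀* ≅ Coker f₋₁*`, so the
duals of `P_{<0}` resolve `M*`. Finitely generated projectives are reflexive, so the dual of that
resolution is `P_{<0}` again, which is exact: `M*` is semi-Gorenstein-projective, and
`M** = (Coker f₋₁*)* ≅ Ker f₋₁`. Finally every functional on `M` factors through `f₀`, so by
minimality it takes values in `J`; on a projective summand of `M` the dual basis lemma then gives
`N = J N`, and Nakayama's lemma kills it.
-/

open LinearMap MulOpposite

section HomFromCokernel

variable {R S : Type*} [Ring R] [Semiring S] {X Y Z N : Type*} [AddCommGroup X] [Module R X]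
  [AddCommGroup Y] [Module R Y] [AddCommGroup N] [Module R N] [Module S N] [SMulCommClass R S N]

theorem LinearMap.range_lcomp_mkQ_range (g : X →ₗ[R] Y) :
    range (lcomp S N (range g).mkQ) = ker (lcomp S N g) := by
  ext ψ
  constructor
  · rintro ⟨φ, rfl⟩
    ext x
    exact (congr_arg φ ((Submodule.Quotient.mk_eq_zero _).2 (mem_range_self g x))).trans
      (map_zero φ)
  · intro hψ
    have hgψ : range g ≤ ker ψ := by
      rintro _ ⟨x, rfl⟩
      exact LinearMap.congr_fun hψ x
    exact ⟨(range g).liftQ ψ hgψ, (range g).liftQ_mkQ ψ hgψ⟩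

noncomputable def LinearMap.homQuotRangeEquiv (g : X →ₗ[R] Y) :
    (Y ⧸ range g →ₗ[R] N) ≃ₗ[S] ker (lcomp S N g) :=
  (LinearEquiv.ofInjective _ (lcomp_injective_of_surjective _ (range g).mkQ_surjective)).trans
    (LinearEquiv.ofEq _ _ (range_lcomp_mkQ_range g))

theorem LinearMap.exists_surjective_homQuotRange [AddCommGroup Z] [Module S Z] (g : X →ₗ[R] Y)
    (c : Z →ₗ[S] Y →ₗ[R] N) (hc : range c = ker (lcomp S N g)) :
    ∃ κ : Z →ₗ[S] Y ⧸ range g →ₗ[R] N, Surjective κ ∧ ker κ = ker c := by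
  refine ⟨(homQuotRangeEquiv g).symm.toLinearMap ∘ₗ (LinearEquiv.ofEq _ _ hc).toLinearMap ∘ₗ
    c.rangeRestrict, ?_, ?_⟩
  · simpa using c.surjective_rangeRestrict
  · rw [LinearEquiv.ker_comp, LinearEquiv.ker_comp, ker_rangeRestrict]

end HomFromCokernel

theorem Module.Projective.exists_comp_eq_of_range_eq_ker {R : Type*} [Ring R]
    {Q X Y Z : Type*} [AddCommGroup Q] [Module R Q] [Module.Projective R Q] [AddCommGroup X]
    [Module R X] [AddCommGroup Y] [Module R Y] [AddCommGroup Z] [Module R Z]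
    {p : X →ₗ[R] Y} {q : Y →ₗ[R] Z} (hpq : range p = ker q) {g : Q →ₗ[R] Y} (hg : q ∘ₗ g = 0) :
    ∃ l : Q →ₗ[R] X, p ∘ₗ l = g := by
  have hg' : ∀ x, g x ∈ range p := fun x => hpq ▸ LinearMap.congr_fun hg x
  obtain ⟨l, hl⟩ := Module.projective_lifting_property p.rangeRestrict (g.codRestrict _ hg')
    p.surjective_rangeRestrict
  exact ⟨l, LinearMap.ext fun x => congr_arg Subtype.val (LinearMap.congr_fun hl x)⟩

section Duality

variable {A : Type u} [Ring A] {P : Type u} [AddCommGroup P] [Module A P]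

theorem Module.Projective.exists_dual_basis [Module.Finite A P] [Module.Projective A P] :
    ∃ (k : ℕ) (x : Fin k → P) (φ : Fin k → P →ₗ[A] A), ∀ p, ∑ j, φ j p • x j = p := by
  classical
  obtain ⟨k, π, hπ⟩ := Module.Finite.exists_fin' A P
  obtain ⟨s, hs⟩ := π.exists_rightInverse_of_surjective (range_eq_top.2 hπ)
  refine ⟨k, fun j => π fun i => if j = i then 1 else 0, fun j => proj j ∘ₗ s, fun p => ?_⟩
  have hp : π (s p) = p := LinearMap.congr_fun hs p
  conv_rhs => rw [← hp, π.pi_apply_eq_sum_univ (s p)]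
  rfl

theorem sum_op_apply_smul_eq_of_dual_basis {k : ℕ} {x : Fin k → P} {φ : Fin k → P →ₗ[A] A}
    (hxφ : ∀ p, ∑ j, φ j p • x j = p) (g : P →ₗ[A] A) : ∑ j, op (g (x j)) • φ j = g := by
  ext p
  conv_rhs => rw [← hxφ p]
  simp [map_sum]

instance Module.Projective.dual [Module.Finite A P] [Module.Projective A P] :
    Module.Projective Aᵐᵒᵖ (P →ₗ[A] A) := by
  obtain ⟨k, x, φ, hxφ⟩ := Module.Projective.exists_dual_basis (A := A) (P := P)
  refine Module.Projective.of_split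
    (LinearMap.pi fun j => (opLinearEquiv Aᵐᵒᵖ).toLinearMap ∘ₗ evalBidual A P (x j))
    (Fintype.linearCombination Aᵐᵒᵖ φ) (LinearMap.ext fun g =>
      (Fintype.linearCombination_apply _ _ _).trans (sum_op_apply_smul_eq_of_dual_basis hxφ g))

instance Module.Finite.dual [Module.Finite A P] [Module.Projective A P] :
    Module.Finite Aᵐᵒᵖ (P →ₗ[A] A) := by
  obtain ⟨k, x, φ, hxφ⟩ := Module.Projective.exists_dual_basis (A := A) (P := P)
  refine Module.Finite.of_surjective (Fintype.linearCombination Aᵐᵒᵖ φ) fun g => ?_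
  exact ⟨fun j => op (g (x j)),
    (Fintype.linearCombination_apply _ _ _).trans (sum_op_apply_smul_eq_of_dual_basis hxφ g)⟩

theorem IsTorsionlessMod.eq_zero (hP : IsTorsionlessMod A P) {p : P}
    (h : ∀ g : P →ₗ[A] A, g p = 0) : p = 0 :=
  (injective_iff_map_eq_zero _).1 hP p (LinearMap.ext h)

theorem isReflexiveMod_of_projective [Module.Finite A P] [Module.Projective A P] :
    IsReflexiveMod A P := by
  obtain ⟨k, x, φ, hxφ⟩ := Module.Projective.exists_dual_basis (A := A) (P := P)
  refine ⟨(injective_iff_map_eq_zero _).2 fun p hp => ?_, fun Φ => ⟨∑ j, Φ (φ j) • x j, ?_⟩⟩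
  · rw [← hxφ p]
    simp [show ∀ g : P →ₗ[A] A, g p = 0 from LinearMap.congr_fun hp]
  · ext g
    conv_rhs => rw [← sum_op_apply_smul_eq_of_dual_basis hxφ g]
    simp [evalBidual]

theorem IsReflexiveMod.exists_eq_op_apply (hP : IsReflexiveMod A P)
    (Ψ : (P →ₗ[A] A) →ₗ[Aᵐᵒᵖ] Aᵐᵒᵖ) : ∃ p : P, ∀ g, Ψ g = op (g p) := by
  obtain ⟨p, hp⟩ := hP.2 ((opLinearEquiv Aᵐᵒᵖ).symm.toLinearMap ∘ₗ Ψ)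
  exact ⟨p, fun g => congr_arg op (LinearMap.congr_fun hp g).symm⟩

end Duality

section Radical

variable {A : Type u} [Ring A]

theorem radSMul_eq_jacobson_smul_top (P : Type u) [AddCommGroup P] [Module A P] :
    radSMul A P = Ring.jacobson A • ⊤ := by
  refine le_antisymm (Submodule.span_le.2 ?_) (Submodule.smul_le.2 fun a ha p _ => ?_)
  · rintro _ ⟨a, ha, p, rfl⟩
    exact Submodule.smul_mem_smul (Ideal.jacobson_bot (R := A) ▸ ha) Submodule.mem_top
  · exact Submodule.subset_span ⟨a, Ideal.jacobson_bot (R := A) ▸ ha, p, rfl⟩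

theorem apply_mem_jacobson_of_mem_radSMul {X : Type u} [AddCommGroup X] [Module A X]
    (h : X →ₗ[A] A) {x : X} (hx : x ∈ radSMul A X) : h x ∈ Ring.jacobson A := by
  rw [radSMul_eq_jacobson_smul_top] at hx
  have hhx : h x ∈ (Ring.jacobson A • ⊤ : Submodule A X).map h := Submodule.mem_map_of_mem hx
  rw [Submodule.map_smul''] at hhx
  have hJ : Ring.jacobson A • Submodule.map h ⊤ ≤ Ring.jacobson A :=
    Submodule.smul_le.2 fun a ha b _ => Ideal.mul_mem_right b _ ha
  exact hJ hhx

variable {P : Type u} [AddCommGroup P] [Module A P] [Module.Finite A P] [Module.Projective A P]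

theorem mem_jacobson_smul_top_of_forall_apply_mem {p : P}
    (h : ∀ g : P →ₗ[A] A, g p ∈ Ring.jacobson A) : p ∈ Ring.jacobson A • (⊤ : Submodule A P) := by
  obtain ⟨k, x, φ, hxφ⟩ := Module.Projective.exists_dual_basis (A := A) (P := P)
  rw [← hxφ p]
  exact Submodule.sum_mem _ fun j _ => Submodule.smul_mem_smul (h (φ j)) Submodule.mem_top

theorem subsingleton_of_forall_apply_mem_jacobson
    (h : ∀ (g : P →ₗ[A] A) (p : P), g p ∈ Ring.jacobson A) : Subsingleton P := by
  have htop : (⊤ : Submodule A P) = ⊥ :=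
    Module.Finite.fg_top.eq_bot_of_le_jacobson_smul fun p _ =>
      mem_jacobson_smul_top_of_forall_apply_mem (h · p)
  exact (Submodule.subsingleton_iff A).1 (subsingleton_of_bot_eq_top htop.symm)

end Radical

theorem Submodule.eq_bot_of_isCompl_of_forall_apply_mem_jacobson {A : Type u} [Ring A]
    {M : Type u} [AddCommGroup M] [Module A M] [Module.Finite A M]
    (hM : ∀ (ψ : M →ₗ[A] A) (m : M), ψ m ∈ Ring.jacobson A) {N₁ N₂ : Submodule A M}
    (hc : IsCompl N₁ N₂) [Module.Projective A N₁] : N₁ = ⊥ := by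
  have hq (y : N₁) : N₁.projectionOnto N₂ hc y = y := projectionOnto_apply_left hc y
  have : Module.Finite A N₁ :=
    Module.Finite.of_surjective (N₁.projectionOnto N₂ hc) fun y => ⟨y, hq y⟩
  have : Subsingleton N₁ := subsingleton_of_forall_apply_mem_jacobson fun g y => by
    simpa [hq] using hM (g ∘ₗ N₁.projectionOnto N₂ hc) y
  exact eq_bot_of_subsingleton

theorem exists_seq_of_exists_step {X : ℕ → Type*} (p : X 0 → Prop)
    (r : ∀ n, X n → X (n + 1) → Prop) (h₀ : ∃ x, p x) (h₁ : ∀ x, p x → ∃ y, r 0 x y)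
    (step : ∀ n x y, r n x y → ∃ z, r (n + 1) y z) :
    ∃ s : ∀ n, X n, p (s 0) ∧ ∀ n, r n (s n) (s (n + 1)) := by
  obtain ⟨x₀, hx₀⟩ := h₀
  obtain ⟨x₁, hx₁⟩ := h₁ x₀ hx₀
  choose next hnext using step
  let t : ∀ n, {xy : X n × X (n + 1) // r n xy.1 xy.2} :=
    Nat.rec ⟨(x₀, x₁), hx₁⟩ fun n xy => ⟨(xy.1.2, next n _ _ xy.2), hnext n _ _ xy.2⟩
  exact ⟨fun n => (t n).1.1, hx₀, fun n => (t n).2⟩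

namespace ProjRes

variable {A : Type u} [Ring A] {M : Type u} [AddCommGroup M] [Module A M]

theorem aug_comp_d (R : ProjRes A M) : R.aug ∘ₗ R.d 0 = 0 :=
  range_le_ker_iff.1 R.exact0.le

theorem d_comp_d (R : ProjRes A M) (n : ℕ) : R.d n ∘ₗ R.d (n + 1) = 0 :=
  range_le_ker_iff.1 (R.exact n).le

theorem exists_chainMap (R S : ProjRes A M) :
    ∃ u : ∀ n, R.P n →ₗ[A] S.P n,
      S.aug ∘ₗ u 0 = R.aug ∧ ∀ n, S.d n ∘ₗ u (n + 1) = u n ∘ₗ R.d n := by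
  have := R.proj
  refine exists_seq_of_exists_step (X := fun n => R.P n →ₗ[A] S.P n)
    (fun u₀ => S.aug ∘ₗ u₀ = R.aug) (fun n u u' => S.d n ∘ₗ u' = u ∘ₗ R.d n) ?_ ?_ ?_
  · exact Module.projective_lifting_property S.aug R.aug S.surj
  · intro u₀ hu₀
    refine Module.Projective.exists_comp_eq_of_range_eq_ker S.exact0 ?_
    rw [← LinearMap.comp_assoc, hu₀, R.aug_comp_d]
  · intro n u u' h
    refine Module.Projective.exists_comp_eq_of_range_eq_ker (S.exact n) ?_
    rw [← LinearMap.comp_assoc, h, LinearMap.comp_assoc, R.d_comp_d, comp_zero]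

theorem exists_nullHomotopy (R : ProjRes A M) (φ : ∀ n, R.P n →ₗ[A] R.P n)
    (hφ₀ : R.aug ∘ₗ φ 0 = 0) (hφ : ∀ n, R.d n ∘ₗ φ (n + 1) = φ n ∘ₗ R.d n) :
    ∃ s : ∀ n, R.P n →ₗ[A] R.P (n + 1),
      R.d 0 ∘ₗ s 0 = φ 0 ∧ ∀ n, R.d (n + 1) ∘ₗ s (n + 1) + s n ∘ₗ R.d n = φ (n + 1) := by
  have := R.proj
  refine exists_seq_of_exists_step (X := fun n => R.P n →ₗ[A] R.P (n + 1))
    (fun s₀ => R.d 0 ∘ₗ s₀ = φ 0) (fun n s s' => R.d (n + 1) ∘ₗ s' + s ∘ₗ R.d n = φ (n + 1))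
    (Module.Projective.exists_comp_eq_of_range_eq_ker R.exact0 hφ₀) ?_ ?_
  · intro s₀ hs₀
    obtain ⟨s₁, hs₁⟩ := Module.Projective.exists_comp_eq_of_range_eq_ker (R.exact 0)
      (g := φ 1 - s₀ ∘ₗ R.d 0) (by rw [comp_sub, hφ 0, ← LinearMap.comp_assoc, hs₀, sub_self])
    exact ⟨s₁, by rw [hs₁, sub_add_cancel]⟩
  · intro n s s' h
    obtain ⟨s'', hs''⟩ := Module.Projective.exists_comp_eq_of_range_eq_ker (R.exact (n + 1))
      (g := φ (n + 2) - s' ∘ₗ R.d (n + 1)) (by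
        rw [comp_sub, hφ (n + 1), ← LinearMap.comp_assoc, ← h, add_comp,
          LinearMap.comp_assoc _ _ s, R.d_comp_d, comp_zero, add_zero, sub_self])
    exact ⟨s'', by rw [hs'', sub_add_cancel]⟩

/-- `R` computes `Ext^{≥1}(M, A) = 0`. -/
def IsDualExact (R : ProjRes A M) : Prop :=
  ∀ n, range (dualMapRight A (R.d n)) = ker (dualMapRight A (R.d (n + 1)))

theorem isDualExact_of_isDualExact (R S : ProjRes A M) (hS : S.IsDualExact) : R.IsDualExact := by
  obtain ⟨u, hu₀, hu⟩ := exists_chainMap R S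
  obtain ⟨v, hv₀, hv⟩ := exists_chainMap S R
  obtain ⟨s, -, hs⟩ := R.exists_nullHomotopy (fun n => v n ∘ₗ u n - LinearMap.id)
    (by rw [comp_sub, ← LinearMap.comp_assoc, hv₀, hu₀, LinearMap.comp_id, sub_self])
    (fun n => by
      rw [comp_sub, sub_comp, ← LinearMap.comp_assoc, hv, LinearMap.comp_assoc, hu,
        LinearMap.comp_assoc, LinearMap.comp_id, LinearMap.id_comp])
  intro n
  refine le_antisymm (range_le_ker_iff.2 ?_) fun g hg => ?_
  · ext h x
    exact (congr_arg h (LinearMap.congr_fun (R.d_comp_d n) x)).trans (map_zero h)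
  · -- `g ∘ v` is a cocycle on `S`, hence a coboundary `h ∘ d`; the homotopy `v ∘ u ≃ id` turns
    -- this back into a coboundary on `R`.
    have hg : g ∘ₗ R.d (n + 1) = 0 := hg
    obtain ⟨h, hh⟩ : g ∘ₗ v (n + 1) ∈ range (dualMapRight A (S.d n)) := by
      rw [hS n]
      show g ∘ₗ v (n + 1) ∘ₗ S.d (n + 1) = 0
      rw [← hv, ← LinearMap.comp_assoc, hg, zero_comp]
    have hh : h ∘ₗ S.d n = g ∘ₗ v (n + 1) := hh
    refine ⟨h ∘ₗ u n - g ∘ₗ s n, ?_⟩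
    show (h ∘ₗ u n - g ∘ₗ s n) ∘ₗ R.d n = g
    have key := congr_arg (g ∘ₗ ·) (hs n)
    simp only [comp_add, comp_sub, ← LinearMap.comp_assoc, hg, zero_comp, zero_add,
      LinearMap.comp_id] at key
    rw [sub_comp, LinearMap.comp_assoc, ← hu, ← LinearMap.comp_assoc, hh, LinearMap.comp_assoc,
      key, LinearMap.comp_assoc]
    abel

end ProjRes

theorem isSemiGorensteinProj_of_isDualExact {A : Type u} [Ring A] {M : Type u} [AddCommGroup M]
    [Module A M] (R : ProjRes A M) (hR : R.IsDualExact) : IsSemiGorensteinProj A M :=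
  fun S => S.isDualExact_of_isDualExact R hR

section Bidual

variable {A : Type u} [Ring A] {X Y Z : Type u} [AddCommGroup X] [Module A X] [AddCommGroup Y]
  [Module A Y] [AddCommGroup Z] [Module A Z]

theorem range_dualMapRight_dualMapRight_eq_ker (g : X →ₗ[A] Y) (h : Y →ₗ[A] Z)
    (hgh : range g = ker h) (hY : IsReflexiveMod A Y) (hZ : IsTorsionlessMod A Z) :
    range (dualMapRight Aᵐᵒᵖ (dualMapRight A g)) =
      ker (dualMapRight Aᵐᵒᵖ (dualMapRight A h)) := by
  refine le_antisymm (range_le_ker_iff.2 ?_) fun Ψ hΨ => ?_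
  · ext Φ η
    show Φ ((η ∘ₗ h) ∘ₗ g) = 0
    rw [LinearMap.comp_assoc, range_le_ker_iff.1 hgh.le, comp_zero, map_zero]
  · obtain ⟨y, hy⟩ := hY.exists_eq_op_apply Ψ
    have hhy : h y = 0 := hZ.eq_zero fun η => by
      have hΨη : Ψ (η ∘ₗ h) = 0 := LinearMap.congr_fun hΨ η
      simpa [hy] using hΨη
    obtain ⟨x, rfl⟩ : y ∈ range g := hgh ▸ hhy
    exact ⟨(opLinearEquiv Aᵐᵒᵖ).toLinearMap ∘ₗ evalBidual A X x,
      LinearMap.ext fun η => (hy η).symm⟩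

theorem ker_lcomp_dualMapRight_eq_map_evalBidual (g : Y →ₗ[A] Z) (hY : IsReflexiveMod A Y)
    (hZ : IsTorsionlessMod A Z) :
    ker (lcomp A A (dualMapRight A g)) = (ker g).map (evalBidual A Y) := by
  ext Φ
  obtain ⟨y, rfl⟩ := hY.2 Φ
  constructor
  · intro hy
    exact Submodule.mem_map_of_mem (hZ.eq_zero (LinearMap.congr_fun hy))
  · rintro ⟨y', hy', hyy'⟩
    refine LinearMap.mem_ker.2 (LinearMap.ext fun η => ?_)
    show η (g y) = 0
    rw [← hY.1 hyy', mem_ker.1 hy', map_zero]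

noncomputable def dualQuotRangeDualMapRightEquivKer (g : Y →ₗ[A] Z) (hY : IsReflexiveMod A Y)
    (hZ : IsTorsionlessMod A Z) :
    ((Y →ₗ[A] A) ⧸ range (dualMapRight A g) →ₗ[Aᵐᵒᵖ] A) ≃ₗ[A] ker g :=
  (homQuotRangeEquiv (dualMapRight A g)).trans <|
    (LinearEquiv.ofEq _ _ (ker_lcomp_dualMapRight_eq_map_evalBidual g hY hZ)).trans
      ((ker g).equivMapOfInjective _ hY.1).symm

end Bidual

section MinimalComplex

variable {A : Type u} [Ring A] {P : ℤ → Type u} [∀ i, AddCommGroup (P i)] [∀ i, Module A (P i)]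
  (f : ∀ i : ℤ, P (i + 1) →ₗ[A] P i)

theorem isSemiGorensteinProj_coker [∀ i, Module.Projective A (P i)] [∀ i, Module.Finite A (P i)]
    (hexact : ∀ n : ℕ, range (f (n + 1)) = ker (f n))
    (hdual : ∀ n : ℕ, range (dualMapRight A (f n)) = ker (dualMapRight A (f (n + 1)))) :
    IsSemiGorensteinProj A (P 0 ⧸ range (f 0)) :=
  isSemiGorensteinProj_of_isDualExact
    { P := fun n => P n
      proj := fun _ => inferInstance
      fin := fun _ => inferInstance
      d := fun n => f n
      aug := (range (f 0)).mkQ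
      surj := (range (f 0)).mkQ_surjective
      exact0 := (range (f 0)).ker_mkQ.symm
      exact := hexact }
    hdual

theorem isSemiGorensteinProj_of_dual_resolution [∀ i, Module.Projective A (P i)]
    [∀ i, Module.Finite A (P i)] {N : Type u} [AddCommGroup N] [Module Aᵐᵒᵖ N]
    (κ : (P (-2 + 1) →ₗ[A] A) →ₗ[Aᵐᵒᵖ] N) (hκ : Surjective κ)
    (hker : range (dualMapRight A (f (-2))) = ker κ)
    (hexact : ∀ n : ℕ, range (f (Int.negSucc (n + 1))) = ker (f (Int.negSucc (n + 2))))
    (hdual : ∀ n : ℕ, range (dualMapRight A (f (Int.negSucc (n + 2)))) =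
      ker (dualMapRight A (f (Int.negSucc (n + 1))))) :
    IsSemiGorensteinProj Aᵐᵒᵖ N :=
  isSemiGorensteinProj_of_isDualExact
    { P := fun n => P (Int.negSucc n) →ₗ[A] A
      proj := fun _ => inferInstance
      fin := fun _ => inferInstance
      d := fun n => dualMapRight A (f (Int.negSucc (n + 1)))
      aug := κ
      surj := hκ
      exact0 := hker
      exact := hdual }
    fun n => range_dualMapRight_dualMapRight_eq_ker _ _ (hexact n) isReflexiveMod_of_projective
      isReflexiveMod_of_projective.1

theorem coker_eq_bot_of_isCompl_of_projective [Module.Finite A (P 0)]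
    (hmin : range (f (-1)) ≤ radSMul A (P (-1)))
    (hdual : range (dualMapRight A (f (-1))) = ker (dualMapRight A (f 0)))
    {N₁ N₂ : Submodule A (P 0 ⧸ range (f 0))} (hc : IsCompl N₁ N₂) [Module.Projective A N₁] :
    N₁ = ⊥ := by
  refine Submodule.eq_bot_of_isCompl_of_forall_apply_mem_jacobson (fun ψ m => ?_) hc
  obtain ⟨z, rfl⟩ := (range (f 0)).mkQ_surjective m
  obtain ⟨h, hh⟩ : (ψ ∘ₗ (range (f 0)).mkQ : P (-1 + 1) →ₗ[A] A) ∈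
      range (dualMapRight A (f (-1))) := by
    rw [hdual]
    exact (range_lcomp_mkQ_range (S := Aᵐᵒᵖ) (N := A) (f 0)).le (mem_range_self _ ψ)
  rw [← LinearMap.comp_apply, ← hh]
  exact apply_mem_jacobson_of_mem_radSMul h (hmin (mem_range_self _ z))

end MinimalComplex

/-- The differential `P_{i+1} → P_i` is `f i`, so `f₁ = f 0` and `f₋₁ = f (-2)`. -/
theorem stmt7_general (A : Type u) [Ring A]
    (P : ℤ → Type u) [∀ i, AddCommGroup (P i)] [∀ i, Module A (P i)]
    (hproj : ∀ i, Module.Projective A (P i)) (hfin : ∀ i, Module.Finite A (P i))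
    (f : ∀ i : ℤ, P (i + 1) →ₗ[A] P i)
    -- minimality: the image of each differential lies in `J·P`
    (hmin : ∀ i, LinearMap.range (f i) ≤ radSMul A (P i))
    -- homology vanishes in all degrees other than `0` and `-1`
    (hH : ∀ i : ℤ, i + 1 ≠ 0 → i + 1 ≠ -1 →
      LinearMap.range (f (i + 1)) = LinearMap.ker (f i))
    -- the `A`-dual complex is acyclic
    (hdual : ∀ i, LinearMap.range (dualMapRight A (f i)) =
      LinearMap.ker (dualMapRight A (f (i + 1)))) :
    -- `M := Coker f₁`
    (IsSemiGorensteinProj A (P 0 ⧸ LinearMap.range (f 0))) ∧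
    (IsSemiGorensteinProj Aᵐᵒᵖ ((P 0 ⧸ LinearMap.range (f 0)) →ₗ[A] A)) ∧
    -- reduced: no nonzero projective direct summand
    (∀ N₁ N₂ : Submodule A (P 0 ⧸ LinearMap.range (f 0)),
      IsCompl N₁ N₂ → Module.Projective A N₁ → N₁ = ⊥) ∧
    -- `M* ≅ Coker (f₋₁* : P₋₂* → P₋₁*)`
    Nonempty (((P 0 ⧸ LinearMap.range (f 0)) →ₗ[A] A) ≃ₗ[Aᵐᵒᵖ]
      ((P (-2 + 1) →ₗ[A] A) ⧸ LinearMap.range (dualMapRight A (f (-2))))) ∧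
    -- `M** ≅ Ker f₋₁`
    Nonempty ((((P 0 ⧸ LinearMap.range (f 0)) →ₗ[A] A) →ₗ[Aᵐᵒᵖ] A) ≃ₗ[A]
      LinearMap.ker (f (-2))) := by
  have := hproj
  have := hfin
  obtain ⟨κ, hκ, hκker⟩ := exists_surjective_homQuotRange (S := Aᵐᵒᵖ) (N := A) (f 0)
    (dualMapRight A (f (-1))) (hdual (-1))
  have hκker' : range (dualMapRight A (f (-2))) = ker κ := (hdual (-2)).trans hκker.symm
  let eDual :=
    (κ.quotKerEquivOfSurjective hκ).symm.trans (Submodule.quotEquivOfEq _ _ hκker'.symm)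
  refine ⟨isSemiGorensteinProj_coker f (fun n => hH n (by omega) (by omega)) (fun n => hdual n),
    isSemiGorensteinProj_of_dual_resolution f κ hκ hκker'
      (fun n => hH (Int.negSucc (n + 2)) (by rw [Int.negSucc_eq]; omega)
        (by rw [Int.negSucc_eq]; omega))
      (fun n => hdual _),
    fun N₁ N₂ hc _ => coker_eq_bot_of_isCompl_of_projective f (hmin (-1)) (hdual (-1)) hc,
    ⟨eDual⟩,
    ⟨(LinearEquiv.congrLeft A A eDual).trans (dualQuotRangeDualMapRightEquivKer (f (-2))
      isReflexiveMod_of_projective isReflexiveMod_of_projective.1)⟩⟩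

/-- one direction of the Main Theorem of [RZ6]. Let `P_•` be a minimal
complex of finitely generated projective modules with homology concentrated in degrees
`0, -1` whose `A`-dual complex is acyclic.  Then `M = Coker f₁` is a reduced
bi-semi-Gorenstein-projective module, `M* ≅ Coker f₋₁*` and `M** ≅ Ker f₋₁`.
Here the map `P_{i+1} → P_i` of the complex is `f i`, so that `f₁ = f 0` and
`f₋₁ = f (-2)`. -/
theorem stmt7 (R₀ : Type u) [CommRing R₀] [IsArtinianRing R₀]
    (A : Type u) [Ring A] [Algebra R₀ A] [Module.Finite R₀ A]
    (P : ℤ → Type u) [∀ i, AddCommGroup (P i)] [∀ i, Module A (P i)]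
    (hproj : ∀ i, Module.Projective A (P i)) (hfin : ∀ i, Module.Finite A (P i))
    (f : ∀ i : ℤ, P (i + 1) →ₗ[A] P i)
    -- minimality: the image of each differential lies in `J·P`
    (hmin : ∀ i, LinearMap.range (f i) ≤ radSMul A (P i))
    -- it is a complex
    (hcpx : ∀ i, LinearMap.range (f (i + 1)) ≤ LinearMap.ker (f i))
    -- homology vanishes in all degrees other than `0` and `-1`
    (hH : ∀ i : ℤ, i + 1 ≠ 0 → i + 1 ≠ -1 →
      LinearMap.range (f (i + 1)) = LinearMap.ker (f i))
    -- the `A`-dual complex is acyclic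
    (hdual : ∀ i, LinearMap.range (dualMapRight A (f i)) =
      LinearMap.ker (dualMapRight A (f (i + 1)))) :
    -- `M := Coker f₁`
    (IsSemiGorensteinProj A (P 0 ⧸ LinearMap.range (f 0))) ∧
    (IsSemiGorensteinProj Aᵐᵒᵖ ((P 0 ⧸ LinearMap.range (f 0)) →ₗ[A] A)) ∧
    -- reduced: no nonzero projective direct summand
    (∀ N₁ N₂ : Submodule A (P 0 ⧸ LinearMap.range (f 0)),
      IsCompl N₁ N₂ → Module.Projective A N₁ → N₁ = ⊥) ∧
    -- `M* ≅ Coker (f₋₁* : P₋₂* → P₋₁*)`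
    Nonempty (((P 0 ⧸ LinearMap.range (f 0)) →ₗ[A] A) ≃ₗ[Aᵐᵒᵖ]
      ((P (-2 + 1) →ₗ[A] A) ⧸ LinearMap.range (dualMapRight A (f (-2))))) ∧
    -- `M** ≅ Ker f₋₁`
    Nonempty ((((P 0 ⧸ LinearMap.range (f 0)) →ₗ[A] A) →ₗ[Aᵐᵒᵖ] A) ≃ₗ[A]
      LinearMap.ker (f (-2))) :=
  stmt7_general A P hproj hfin f hmin hH hdual
end

section
/- Let R be a ring that is left noetherian and left hereditary (every submodule of a projective left R-module is projective). Let N be a left R-module and ε an R-endomorphism of N with ε² = 0, so that (N, ε) is a left module over the dual-number ring R[x]/⟨x²⟩. Then N is a finitely generated projective R-module if and only if N is a finitely generated R-module and the R[x]/⟨x²⟩-module (N, ε) is torsionless, i.e. embeds into a projective R[x]/⟨x²⟩-module. -/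
universe u

open TrivSqZeroExt MulOpposite

/-- Lemma [RZ3, 2.1]. Let `R` be left noetherian and left hereditary,
and let `N` be a module over the dual-number ring `Λ = R[x]/⟨x²⟩` (equivalently, a
differential `R`-module `(N, ε)`, where `ε` is the action of the dual number `ε`).
Then `N` is a finitely generated projective `R`-module if and only if `N` is a finitely
generated `R`-module and `N` is a torsionless `Λ`-module. -/
theorem stmt8 (R : Type u) [Ring R] [IsNoetherianRing R]
    -- `R` is left hereditary: submodules of projective modules are projective
    (hhered : ∀ (P : Type u) [AddCommGroup P] [Module R P], Module.Projective R P →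
      ∀ N' : Submodule R P, Module.Projective R N')
    (N : Type u) [AddCommGroup N] [Module R N]
    [Module (DualNumber R) N] [IsScalarTower R (DualNumber R) N]
    -- the differential `ε : N → N`, given by the action of the dual number `ε`
    (ε : N →ₗ[R] N) (hε : ∀ n : N, (DualNumber.eps : DualNumber R) • n = ε n)
    (hε2 : ε.comp ε = 0) :
    (Module.Finite R N ∧ Module.Projective R N) ↔
      (Module.Finite R N ∧
        ∃ (P : Type u) (_ : AddCommGroup P) (_ : Module (DualNumber R) P),
          Module.Projective (DualNumber R) P ∧
            ∃ f : N →ₗ[DualNumber R] P, Function.Injective f) := by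
  haveI : Module.Free R (DualNumber R) := inferInstanceAs (Module.Free R (R × R))
  constructor
  · rintro ⟨hfin, hproj⟩
    refine ⟨hfin, ?_⟩
    -- the dual-number module structure on `N × N` (this is `Λ ⊗ N`)
    letI smul2 : SMul (DualNumber R) (N × N) :=
      ⟨fun a p => (a.fst • p.1, a.snd • p.1 + a.fst • p.2)⟩
    have sdef : ∀ (a : DualNumber R) (p : N × N),
        a • p = (a.fst • p.1, a.snd • p.1 + a.fst • p.2) := fun _ _ => rfl
    letI mod2 : Module (DualNumber R) (N × N) :=
      { one_smul := fun p => by simp [sdef]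
        mul_smul := fun x y p => by
          refine Prod.ext ?_ ?_ <;>
            simp [sdef, fst_mul, snd_mul, add_smul, mul_smul, smul_add,
              op_smul_eq_mul, smul_eq_mul] <;> abel
        smul_zero := fun a => by simp [sdef]
        smul_add := fun a p q => by
          refine Prod.ext ?_ ?_ <;> simp [sdef, smul_add] <;> abel
        add_smul := fun a b p => by
          refine Prod.ext ?_ ?_ <;> simp [sdef, add_smul, fst_add, snd_add] <;> abel
        zero_smul := fun p => by simp [sdef] }
    obtain ⟨s, hs⟩ := Module.projective_def'.mp hproj
    have hs' : ∀ m : N, Finsupp.linearCombination R id (s m) = m := fun m =>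
      DFunLike.congr_fun hs m
    -- the splitting `S : N × N →ₗ[Λ] (N →₀ Λ)`
    let S : (N × N) →ₗ[DualNumber R] (N →₀ DualNumber R) :=
      { toFun := fun p =>
          (s p.1).mapRange (inl : R → DualNumber R) (inl_zero R)
            + (s p.2).mapRange (inr : R → DualNumber R) (inr_zero R)
        map_add' := fun p q => by
          ext x <;>
            simp [Finsupp.mapRange_apply, map_add, fst_add, snd_add, fst_inl, snd_inl,
              fst_inr, snd_inr, Prod.fst_add, Prod.snd_add, Finsupp.add_apply] <;> abel
        map_smul' := fun a p => by
          ext x <;>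
            simp [sdef, Finsupp.mapRange_apply, fst_mul, snd_mul,
              op_smul_eq_mul, smul_eq_mul, fst_inl, snd_inl, fst_inr, snd_inr,
              fst_add, snd_add, Finsupp.add_apply] }
    let T : (N →₀ DualNumber R) →ₗ[DualNumber R] (N × N) :=
      Finsupp.linearCombination (DualNumber R) (fun n : N => ((n, 0) : N × N))
    have hTS : T.comp S = LinearMap.id := by
      apply LinearMap.ext; intro p
      show T (S p) = p
      have h1 : ∀ u : N →₀ R,
          T (u.mapRange (inl : R → DualNumber R) (inl_zero R))
            = (Finsupp.linearCombination R id u, 0) := by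
        intro u
        rw [show T = Finsupp.linearCombination (DualNumber R)
          (fun n : N => ((n, 0) : N × N)) from rfl]
        rw [Finsupp.linearCombination_apply, Finsupp.linearCombination_apply,
          Finsupp.sum_mapRange_index (h := fun i (a : DualNumber R) => a • ((i, 0) : N × N)) (fun _ => mod2.zero_smul _)]
        rw [Finsupp.sum, Finsupp.sum, Prod.ext_iff]
        constructor
        · rw [Prod.fst_sum]; apply Finset.sum_congr rfl; intro x _
          simp [sdef, fst_inl, snd_inl]
        · rw [Prod.snd_sum]; simp [sdef, fst_inl, snd_inl]
      have h2 : ∀ u : N →₀ R,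
          T (u.mapRange (inr : R → DualNumber R) (inr_zero R))
            = (0, Finsupp.linearCombination R id u) := by
        intro u
        rw [show T = Finsupp.linearCombination (DualNumber R)
          (fun n : N => ((n, 0) : N × N)) from rfl]
        rw [Finsupp.linearCombination_apply, Finsupp.linearCombination_apply,
          Finsupp.sum_mapRange_index (h := fun i (a : DualNumber R) => a • ((i, 0) : N × N)) (fun _ => mod2.zero_smul _)]
        rw [Finsupp.sum, Finsupp.sum, Prod.ext_iff]
        constructor
        · rw [Prod.fst_sum]; simp [sdef, fst_inr, snd_inr]
        · rw [Prod.snd_sum]; apply Finset.sum_congr rfl; intro x _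
          simp [sdef, fst_inr, snd_inr]
      have hSp : S p = (s p.1).mapRange (inl : R → DualNumber R) (inl_zero R)
            + (s p.2).mapRange (inr : R → DualNumber R) (inr_zero R) := rfl
      rw [hSp, map_add, h1, h2, hs', hs']
      simp
    haveI hP2 : Module.Projective (DualNumber R) (N × N) :=
      Module.Projective.of_split S T hTS
    -- the embedding `n ↦ (ε n, n)`
    have hinl : ∀ (r : R) (n : N), (inl r : DualNumber R) • n = r • n := by
      intro r n
      have : (inl r : DualNumber R) = r • (1 : DualNumber R) := by
        refine TrivSqZeroExt.ext ?_ ?_ <;>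
          simp [fst_inl, snd_inl, fst_smul, snd_smul, fst_one, snd_one]
      rw [this, smul_assoc, one_smul]
    have key : ∀ (a : DualNumber R) (n : N), a • n = a.fst • n + a.snd • ε n := by
      intro a n
      conv_lhs => rw [← inl_fst_add_inr_snd_eq a]
      rw [add_smul, hinl]
      congr 1
      rw [DualNumber.inr_eq_smul_eps, smul_assoc, hε]
    let f : N →ₗ[DualNumber R] (N × N) :=
      { toFun := fun n => (ε n, n)
        map_add' := fun m n => by simp
        map_smul' := fun a n => by
          refine Prod.ext ?_ ?_
          · show ε (a • n) = a.fst • ε n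
            rw [key, map_add, map_smul, map_smul,
              show ε (ε n) = 0 from DFunLike.congr_fun hε2 n]
            simp
          · show a • n = a.snd • ε n + a.fst • n
            rw [key, add_comm] }
    exact ⟨N × N, inferInstance, mod2, hP2, f, fun m n h => congrArg Prod.snd h⟩
  · rintro ⟨hfin, P, _, _, hPproj, f, hf⟩
    refine ⟨hfin, ?_⟩
    letI : Module R P := Module.compHom P (TrivSqZeroExt.inlHom R R)
    have rdef : ∀ (r : R) (p : P), r • p = (inl r : DualNumber R) • p := fun _ _ => rfl
    haveI : IsScalarTower R (DualNumber R) P :=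
      ⟨fun r a p => by
        rw [rdef, ← mul_smul, inl_mul_eq_smul]⟩
    haveI : IsScalarTower R (DualNumber R) (DualNumber R) :=
      ⟨fun r a b => by
        refine TrivSqZeroExt.ext ?_ ?_ <;>
          simp [fst_mul, snd_mul, fst_smul, snd_smul, smul_eq_mul,
            op_smul_eq_mul, mul_add, mul_assoc]⟩
    obtain ⟨s, hs⟩ := Module.projective_def'.mp hPproj
    haveI hPR : Module.Projective R P := by
      refine Module.Projective.of_split (s.restrictScalars R)
        ((Finsupp.linearCombination (DualNumber R) id).restrictScalars R) ?_
      apply LinearMap.ext; intro p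
      exact DFunLike.congr_fun hs p
    have hrange : Module.Projective R (LinearMap.range (f.restrictScalars R)) :=
      hhered P hPR _
    exact Module.Projective.of_equiv
      (LinearEquiv.ofInjective (f.restrictScalars R) hf).symm
end

section
/- Let k be a field, H a finite-dimensional hereditary k-algebra (e.g. the path algebra kQ of a finite acyclic quiver), and Λ = H[x]/⟨x²⟩ the dual-number algebra over H. Let (N, ε) be a perfect differential H-module, i.e. N is a finitely generated projective H-module and ε ∈ End_H(N) with ε² = 0. Then the following are equivalent: (1) the homology H(N, ε) = Ker ε / Im ε is zero; (2) (N, ε) is a projective Λ-module; (3) (N, ε) ≅ (P ⊕ P, [[0,1],[0,0]]) for some finitely generated projective H-module P, i.e. N ≅ P ⊕ P with ε mapping the second copy identically onto the first and killing the first. -/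
/-!
An `H[ε]`-module is an `H`-module with an `H`-linear differential `ε`. If its homology vanishes,
`ε` maps `N` onto `P := Im ε = Ker ε`; heredity makes `P` projective, so this surjection
splits and `N ≅ P × P` with `ε` the shift. Such a module is induced from `P`: an `H`-linear
lift of `P → N` through the free module `N →₀ H[ε]` extends `ε`-equivariantly to a section,
so `N` is `H[ε]`-projective. Finally, the homology of `H[ε]`, hence of every free and every
projective `H[ε]`-module, vanishes.
-/

universe u

open DualNumber TrivSqZeroExt

instance DualNumber.isScalarTower_self (R : Type*) [Ring R] : IsScalarTower R R[ε] R[ε] :=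
  ⟨fun r x y => by ext <;> simp [mul_assoc, mul_add]⟩

namespace DualNumber

section Module

variable {R : Type*} [Ring R] {M M' : Type*} [AddCommGroup M] [Module R[ε] M]

theorem eps_smul_eps_smul (x : M) : (ε : R[ε]) • (ε : R[ε]) • x = 0 := by
  rw [smul_smul, eps_mul_eps, zero_smul]

variable [Module R M] [IsScalarTower R R[ε] M] [AddCommGroup M'] [Module R M'] [Module R[ε] M']
  [IsScalarTower R R[ε] M']

theorem inl_smul (r : R) (x : M) : (inl r : R[ε]) • x = r • x := by
  rw [← smul_one_smul R[ε] r x]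
  congr 1
  ext <;> simp

theorem eps_smul_smul_comm (r : R) (x : M) :
    (ε : R[ε]) • r • x = r • (ε : R[ε]) • x := by
  rw [← inl_smul r x, smul_smul, (commute_eps_left _).eq, ← smul_smul, inl_smul]

theorem smul_eq_fst_smul_add_snd_smul_eps_smul (c : R[ε]) (x : M) :
    c • x = c.fst • x + c.snd • (ε : R[ε]) • x := by
  conv_lhs => rw [← inl_fst_add_inr_snd_eq c]
  rw [add_smul, inr_eq_smul_eps, smul_assoc, inl_smul]

variable (R M) in
def epsLinearMap : M →ₗ[R] M where
  toFun x := (ε : R[ε]) • x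
  map_add' := smul_add _
  map_smul' := eps_smul_smul_comm

@[simp]
theorem epsLinearMap_apply (x : M) : epsLinearMap R M x = (ε : R[ε]) • x := rfl

def linearMapOfMapEpsSmul (f : M →ₗ[R] M')
    (hf : ∀ x, f ((ε : R[ε]) • x) = (ε : R[ε]) • f x) : M →ₗ[R[ε]] M' where
  toFun := f
  map_add' := f.map_add
  map_smul' c x := by
    rw [RingHom.id_apply, smul_eq_fst_smul_add_snd_smul_eps_smul, map_add, map_smul, map_smul,
      hf, ← smul_eq_fst_smul_add_snd_smul_eps_smul]

end Module

section Homology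

variable (R : Type*) [Ring R] (M : Type*) [AddCommGroup M] [Module R[ε] M]

def HomologyVanishes : Prop :=
  ∀ n : M, (ε : R[ε]) • n = 0 → ∃ m : M, (ε : R[ε]) • m = n

theorem homologyVanishes_finsupp (ι : Type*) : HomologyVanishes R (ι →₀ R[ε]) := by
  intro f hf
  refine ⟨f.mapRange (fun c => inl c.snd) (by rw [snd_zero, inl_zero]), Finsupp.ext fun i => ?_⟩
  have hfst : (f i).fst = 0 := by
    simpa [smul_eq_mul] using congrArg snd (DFunLike.congr_fun hf i)
  rw [Finsupp.smul_apply, Finsupp.mapRange_apply]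
  ext <;> simp [smul_eq_mul, hfst]

variable {R M}

theorem HomologyVanishes.of_retraction {M' : Type*} [AddCommGroup M'] [Module R[ε] M']
    (h : HomologyVanishes R M') (s : M →ₗ[R[ε]] M') (π : M' →ₗ[R[ε]] M)
    (hπs : π ∘ₗ s = LinearMap.id) : HomologyVanishes R M := by
  intro n hn
  obtain ⟨m, hm⟩ := h (s n) (by rw [← map_smul, hn, map_zero])
  refine ⟨π m, ?_⟩
  rw [← map_smul, hm, ← LinearMap.comp_apply, hπs, LinearMap.id_apply]

theorem homologyVanishes_of_projective [Module.Projective R[ε] M] : HomologyVanishes R M :=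
  have ⟨s, hs⟩ := Module.projective_def'.mp ‹Module.Projective R[ε] M›
  (homologyVanishes_finsupp R M).of_retraction s _ hs

theorem HomologyVanishes.ker_epsLinearMap_eq_range [Module R M] [IsScalarTower R R[ε] M]
    (h : HomologyVanishes R M) :
    LinearMap.ker (epsLinearMap R M) = LinearMap.range (epsLinearMap R M) := by
  refine le_antisymm (fun n hn => h n hn) ?_
  rintro _ ⟨m, rfl⟩
  exact eps_smul_eps_smul m

end Homology

end DualNumber

theorem LinearMap.exists_linearEquiv_prod_of_ker_eq_range {R M : Type*} [Ring R]
    [AddCommGroup M] [Module R M] (f : M →ₗ[R] M) (hf : ker f = range f)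
    [Module.Projective R (range f)] :
    ∃ e : M ≃ₗ[R] range f × range f, ∀ x, e (f x) = ((e x).2, 0) := by
  have hexact : Function.Exact (range f).subtype f.rangeRestrict :=
    LinearMap.exact_iff.mpr (by rw [ker_rangeRestrict, Submodule.range_subtype, hf])
  obtain ⟨l, hl⟩ := Module.projective_lifting_property f.rangeRestrict LinearMap.id
    f.surjective_rangeRestrict
  let e := hexact.splitSurjectiveEquiv Subtype.val_injective ⟨l, hl⟩
  refine ⟨e.1, fun x => ?_⟩
  have hfx : f x = e.1.symm (f.rangeRestrict x, 0) := congrArg (· (f.rangeRestrict x)) e.2.1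
  rw [hfx, LinearEquiv.apply_symm_apply]
  exact congrArg (·, 0) (LinearMap.congr_fun e.2.2 x)

namespace DualNumber

theorem projective_of_linearEquiv_prod {R M P : Type*} [Ring R] [AddCommGroup M]
    [Module R M] [Module R[ε] M] [IsScalarTower R R[ε] M] [AddCommGroup P] [Module R P]
    [Module.Projective R P]
    (e : M ≃ₗ[R] P × P) (he : ∀ x, e ((ε : R[ε]) • x) = ((e x).2, 0)) :
    Module.Projective R[ε] M := by
  let π := Finsupp.linearCombination R[ε] (id : M → M)
  have hπ : Function.Surjective π := fun x => ⟨Finsupp.single x 1, by simp [π]⟩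
  obtain ⟨τ, hτ⟩ := Module.projective_lifting_property (π.restrictScalars R)
    (e.symm.toLinearMap ∘ₗ LinearMap.inr R P P) hπ
  have hτ' (p : P) : π (τ p) = e.symm (0, p) := LinearMap.congr_fun hτ p
  have heps (p : P) : (ε : R[ε]) • e.symm (0, p) = e.symm (p, 0) :=
    e.injective (by rw [he, LinearEquiv.apply_symm_apply, LinearEquiv.apply_symm_apply])
  let s₀ : M →ₗ[R] M →₀ R[ε] := τ ∘ₗ LinearMap.snd R P P ∘ₗ e.toLinearMap
    + epsLinearMap R _ ∘ₗ τ ∘ₗ LinearMap.fst R P P ∘ₗ e.toLinearMap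
  have hs₀ (x : M) : s₀ ((ε : R[ε]) • x) = (ε : R[ε]) • s₀ x := by
    simp [s₀, he, eps_smul_eps_smul]
  refine Module.projective_def'.mpr
    ⟨linearMapOfMapEpsSmul s₀ hs₀, LinearMap.ext fun x => ?_⟩
  change π (τ (e x).2 + (ε : R[ε]) • τ (e x).1) = x
  rw [map_add, map_smul, hτ', hτ', heps, ← map_add, Prod.mk_add_mk, zero_add, add_zero,
    LinearEquiv.symm_apply_apply]

end DualNumber

theorem stmt10_general (H : Type u) [Ring H]
    -- `H` is hereditary: submodules of projective modules are projective
    (hhered : ∀ (P : Type u) [AddCommGroup P] [Module H P], Module.Projective H P →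
      ∀ N' : Submodule H P, Module.Projective H N')
    (N : Type u) [AddCommGroup N] [Module H N]
    [Module (DualNumber H) N] [IsScalarTower H (DualNumber H) N]
    -- `(N, ε)` is perfect: `N` is a finitely generated projective `H`-module
    (hfin : Module.Finite H N) (hproj : Module.Projective H N) :
    List.TFAE [
      -- (1) the homology `Ker ε / Im ε` is zero
      ∀ n : N, (DualNumber.eps : DualNumber H) • n = 0 →
        ∃ m : N, (DualNumber.eps : DualNumber H) • m = n,
      -- (2) `(N, ε)` is a projective `Λ`-module
      Module.Projective (DualNumber H) N,
      -- (3) `(N, ε) ≅ (P ⊕ P, [[0,1],[0,0]])`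
      ∃ (P : Type u) (_ : AddCommGroup P) (_ : Module H P),
        Module.Projective H P ∧ Module.Finite H P ∧
        ∃ e : N ≃ₗ[H] P × P,
          ∀ n : N, e ((DualNumber.eps : DualNumber H) • n) = ((e n).2, 0)
    ] := by
  tfae_have 1 → 3 := fun (h1 : HomologyVanishes H N) =>
    have hP := hhered N hproj (LinearMap.range (epsLinearMap H N))
    ⟨_, _, _, hP, Module.Finite.range _,
      (epsLinearMap H N).exists_linearEquiv_prod_of_ker_eq_range h1.ker_epsLinearMap_eq_range⟩
  tfae_have 3 → 2 := fun ⟨_, _, _, _, _, e, he⟩ => projective_of_linearEquiv_prod e he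
  tfae_have 2 → 1 := fun _ => homologyVanishes_of_projective
  tfae_finish

/-- Theorem [RZ3, Theorem 2 (1)]. For a perfect differential
`H`-module `(N, ε)` over a finite-dimensional hereditary algebra `H`, the following are
equivalent: (1) the homology `Ker ε / Im ε` vanishes; (2) `(N, ε)` is a projective
module over `Λ = H[x]/⟨x²⟩`; (3) `(N, ε) ≅ (P ⊕ P, [[0,1],[0,0]])` for some finitely
generated projective `H`-module `P`. -/
theorem stmt10 (k H : Type u) [Field k] [Ring H] [Algebra k H] [FiniteDimensional k H]
    -- `H` is hereditary: submodules of projective modules are projective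
    (hhered : ∀ (P : Type u) [AddCommGroup P] [Module H P], Module.Projective H P →
      ∀ N' : Submodule H P, Module.Projective H N')
    (N : Type u) [AddCommGroup N] [Module H N]
    [Module (DualNumber H) N] [IsScalarTower H (DualNumber H) N]
    -- `(N, ε)` is perfect: `N` is a finitely generated projective `H`-module
    (hfin : Module.Finite H N) (hproj : Module.Projective H N) :
    List.TFAE [
      -- (1) the homology `Ker ε / Im ε` is zero
      ∀ n : N, (DualNumber.eps : DualNumber H) • n = 0 →
        ∃ m : N, (DualNumber.eps : DualNumber H) • m = n,
      -- (2) `(N, ε)` is a projective `Λ`-module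
      Module.Projective (DualNumber H) N,
      -- (3) `(N, ε) ≅ (P ⊕ P, [[0,1],[0,0]])`
      ∃ (P : Type u) (_ : AddCommGroup P) (_ : Module H P),
        Module.Projective H P ∧ Module.Finite H P ∧
        ∃ e : N ≃ₗ[H] P × P,
          ∀ n : N, e ((DualNumber.eps : DualNumber H) • n) = ((e n).2, 0)
    ] :=
  stmt10_general H hhered N hfin hproj
end

section
/- Let F : 𝒜 → ℬ be a triangle functor between triangulated categories, let Ker F be the full triangulated subcategory of objects X with F(X) ≅ 0, let V_F : 𝒜 → 𝒜/Ker F be the Verdier quotient functor, and let F̃ : 𝒜/Ker F → ℬ be the unique triangle functor with F = F̃ ∘ V_F. Then the following are equivalent: (1) F is objective; (2) F satisfies condition (WSM); (3) F̃ is faithful. -/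
/-!
Because `F` is a triangle functor, `kerW F` is exactly the class of morphisms inverted by `F`, and
it admits a calculus of left fractions. So `V f = V g` iff `f ≫ s = g ≫ s` for some `s` inverted
by `F`, and each of the three conditions becomes: every `f` with `F f = 0` satisfies `f ≫ s = 0`
for some `s` inverted by `F`. For objectivity, `f` then factors through the fibre `K → Y` of `s`,
and conversely the cone of `K → Y` is such an `s`. For (WSM): if `F u` is split mono, the fibre
`w` of `u` has `F w = 0`, and an `s` killing `w` factors through `u`; if `F f = 0`, then `F` makes
`Y → cone f` split mono, and (WSM) extends it to the required `s`.
-/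

universe v u v' u' v'' u''

open CategoryTheory Limits Pretriangulated

section CatPreamble

variable {𝒜 : Type u} [Category.{v} 𝒜] {ℬ : Type u'} [Category.{v'} ℬ]

/-- An additive functor is objective if every morphism killed by `F` factors through an
object killed by `F`. -/
def ObjectiveFunctor [Limits.HasZeroMorphisms ℬ] (F : 𝒜 ⥤ ℬ) : Prop :=
  ∀ ⦃X Y : 𝒜⦄ (f : X ⟶ Y), F.map f = 0 →
    ∃ (K : 𝒜) (g : X ⟶ K) (h : K ⟶ Y), Limits.IsZero (F.obj K) ∧ g ≫ h = f

/-- Condition (WSM). -/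
def CondWSM (F : 𝒜 ⥤ ℬ) : Prop :=
  ∀ ⦃X Y : 𝒜⦄ (u : X ⟶ Y), IsSplitMono (F.map u) →
    ∃ (X' : 𝒜) (u' : Y ⟶ X'), IsIso (F.map (u ≫ u'))

/-- Condition (I). -/
def CondI (F : 𝒜 ⥤ ℬ) : Prop :=
  ∀ ⦃X Y : 𝒜⦄ (u : X ⟶ Y) (_ : IsIso (F.map u)),
    ∃ u' : Y ⟶ X, F.map u' = CategoryTheory.inv (F.map u)

/-- Condition (SM). -/
def CondSM (F : 𝒜 ⥤ ℬ) : Prop :=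
  ∀ ⦃X Y : 𝒜⦄ (u : X ⟶ Y), IsSplitMono (F.map u) →
    ∃ u' : Y ⟶ X, F.map (u ≫ u') = 𝟙 (F.obj X)

variable (𝒜) in
/-- Iterated composition of an endomorphism. -/
def compPow {X : 𝒜} (f : X ⟶ X) : ℕ → (X ⟶ X)
  | 0 => 𝟙 X
  | n + 1 => f ≫ compPow f n

variable (𝒜) in
/-- A Fitting category: every endomorphism decomposes as an automorphism plus a
nilpotent endomorphism along a direct sum decomposition of the object. -/
def IsFittingCategory [Preadditive 𝒜] : Prop :=
  ∀ (X : 𝒜) (a : X ⟶ X),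
    ∃ (X' X'' : 𝒜) (i' : X' ⟶ X) (p' : X ⟶ X') (i'' : X'' ⟶ X) (p'' : X ⟶ X''),
      i' ≫ p' = 𝟙 X' ∧ i'' ≫ p'' = 𝟙 X'' ∧ i' ≫ p'' = 0 ∧ i'' ≫ p' = 0 ∧
      p' ≫ i' + p'' ≫ i'' = 𝟙 X ∧
      i' ≫ a ≫ p'' = 0 ∧ i'' ≫ a ≫ p' = 0 ∧
      IsIso (i' ≫ a ≫ p') ∧ ∃ n : ℕ, compPow 𝒜 (i'' ≫ a ≫ p'') (n + 1) = 0

section Triangulated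

variable [HasZeroObject 𝒜] [Preadditive 𝒜] [HasShift 𝒜 ℤ]
  [∀ n : ℤ, (shiftFunctor 𝒜 n).Additive] [Pretriangulated 𝒜]
  [HasZeroObject ℬ] [Preadditive ℬ] [HasShift ℬ ℤ]
  [∀ n : ℤ, (shiftFunctor ℬ n).Additive] [Pretriangulated ℬ]

/-- The class of morphisms of `𝒜` whose cone is killed by `F`; the Verdier quotient of
`𝒜` by `Ker F` is the localization of `𝒜` at this class. -/
def kerW (F : 𝒜 ⥤ ℬ) : MorphismProperty 𝒜 := fun X Y f =>
  ∃ (Z : 𝒜) (g : Y ⟶ Z) (h : Z ⟶ X⟦(1 : ℤ)⟧),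
    (Triangle.mk f g h ∈ distTriang 𝒜) ∧ IsZero (F.obj Z)

end Triangulated

end CatPreamble

namespace CategoryTheory.Localization

lemma faithful_iff_forall_map_eq_map {C D E : Type*} [Category C] [Category D] [Category E]
    (L : C ⥤ D) (W : MorphismProperty C) [L.IsLocalization W] [W.HasLeftCalculusOfFractions]
    (G : D ⥤ E) :
    G.Faithful ↔ ∀ ⦃X Y : C⦄ (f g : X ⟶ Y),
      G.map (L.map f) = G.map (L.map g) → L.map f = L.map g := by
  refine ⟨fun _ X Y f g h => G.map_injective h, fun h => ⟨fun {D₁ D₂} φ ψ hφψ => ?_⟩⟩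
  have := essSurj L W
  let e₁ := L.objObjPreimageIso D₁
  let e₂ := L.objObjPreimageIso D₂
  obtain ⟨ζ, hφ, hψ⟩ := exists_leftFraction₂ L W (e₁.hom ≫ φ ≫ e₂.inv) (e₁.hom ≫ ψ ≫ e₂.inv)
  have hφ' := hφ ▸ ζ.fst.map_comp_map_s L (inverts L W)
  have hψ' := hψ ▸ ζ.snd.map_comp_map_s L (inverts L W)
  have hnum : L.map ζ.f = L.map ζ.f' :=
    h _ _ (by simp only [← hφ', ← hψ', Functor.map_comp, hφψ])
  rw [← cancel_epi e₁.hom, ← cancel_mono e₂.inv, ← cancel_mono (L.map ζ.s)]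
  simpa only [Category.assoc, hφ', hψ'] using hnum

end CategoryTheory.Localization

section TriangleFunctor

variable {𝒜 : Type u} [Category.{v} 𝒜] [HasZeroObject 𝒜] [Preadditive 𝒜] [HasShift 𝒜 ℤ]
  [∀ n : ℤ, (shiftFunctor 𝒜 n).Additive] [Pretriangulated 𝒜]
  {ℬ : Type u'} [Category.{v'} ℬ] [HasZeroObject ℬ] [Preadditive ℬ] [HasShift ℬ ℤ]
  [∀ n : ℤ, (shiftFunctor ℬ n).Additive] [Pretriangulated ℬ]
  (F : 𝒜 ⥤ ℬ) [F.CommShift ℤ] [F.IsTriangulated]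

lemma isZero_map_obj₁_iff_isIso_map_mor₂ {T : Triangle 𝒜} (hT : T ∈ distTriang 𝒜) :
    IsZero (F.obj T.obj₁) ↔ IsIso (F.map T.mor₂) :=
  Triangle.isZero₁_iff_isIso₂ _ (F.map_distinguished _ hT)

lemma isZero_map_obj₃_iff_isIso_map_mor₁ {T : Triangle 𝒜} (hT : T ∈ distTriang 𝒜) :
    IsZero (F.obj T.obj₃) ↔ IsIso (F.map T.mor₁) :=
  Triangle.isZero₃_iff_isIso₁ _ (F.map_distinguished _ hT)

lemma kerW_iff_isIso_map {X Y : 𝒜} (f : X ⟶ Y) : kerW F f ↔ IsIso (F.map f) := by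
  constructor
  · rintro ⟨Z, g, h, hT, hZ⟩
    exact (isZero_map_obj₃_iff_isIso_map_mor₁ F hT).1 hZ
  · intro hf
    obtain ⟨Z, g, h, hT⟩ := distinguished_cocone_triangle f
    exact ⟨Z, g, h, hT, (isZero_map_obj₃_iff_isIso_map_mor₁ F hT).2 hf⟩

instance kerW_isMultiplicative : (kerW F).IsMultiplicative where
  id_mem X := (kerW_iff_isIso_map F _).2 (by rw [F.map_id]; infer_instance)
  comp_mem f g hf hg := by
    rw [kerW_iff_isIso_map] at hf hg ⊢
    rw [F.map_comp]
    infer_instance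

instance kerW_hasLeftCalculusOfFractions : (kerW F).HasLeftCalculusOfFractions where
  exists_leftFraction X Y φ := by
    obtain ⟨Z, g, h, hT, hZ⟩ := φ.hs
    obtain ⟨Y', s', f', hT'⟩ := distinguished_cocone_triangle₂ (h ≫ φ.f⟦(1 : ℤ)⟧')
    obtain ⟨b, hb, -⟩ := complete_distinguished_triangle_morphism₂ _ _ hT hT' φ.f (𝟙 Z)
      (Category.id_comp _).symm
    exact ⟨MorphismProperty.LeftFraction.mk b s' ⟨_, _, _, hT', hZ⟩, hb.symm⟩
  ext X' X Y f₁ f₂ s hs hsf := by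
    obtain ⟨Z, g, h, hT, hZ⟩ := hs
    have hs_sub : s ≫ (f₁ - f₂) = 0 := by rw [Preadditive.comp_sub, hsf, sub_self]
    obtain ⟨q, hq⟩ : ∃ q : Z ⟶ Y, f₁ - f₂ = g ≫ q := Triangle.yoneda_exact₂ _ hT _ hs_sub
    obtain ⟨Y', r, t, hT'⟩ := distinguished_cocone_triangle q
    have hqr : q ≫ r = 0 := comp_distTriang_mor_zero₁₂ _ hT'
    refine ⟨Y', r, (kerW_iff_isIso_map F r).2 ((isZero_map_obj₁_iff_isIso_map_mor₂ F hT').1 hZ),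
      ?_⟩
    rw [← sub_eq_zero, ← Preadditive.sub_comp, hq, Category.assoc, hqr, Limits.comp_zero]

lemma exists_kerW_comp_eq_zero_iff {X Y : 𝒜} (f : X ⟶ Y) :
    (∃ (Z : 𝒜) (s : Y ⟶ Z), kerW F s ∧ f ≫ s = 0) ↔
      ∃ (K : 𝒜) (g : X ⟶ K) (h : K ⟶ Y), IsZero (F.obj K) ∧ g ≫ h = f := by
  constructor
  · rintro ⟨Z, s, hs, hfs⟩
    obtain ⟨K, h, t, hT⟩ := distinguished_cocone_triangle₁ s
    obtain ⟨g, hg⟩ := Triangle.coyoneda_exact₂ _ hT f hfs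
    exact ⟨K, g, h, (isZero_map_obj₁_iff_isIso_map_mor₂ F hT).2
      ((kerW_iff_isIso_map F s).1 hs), hg.symm⟩
  · rintro ⟨K, g, h, hK, rfl⟩
    obtain ⟨Z, s, t, hT⟩ := distinguished_cocone_triangle h
    refine ⟨Z, s, (kerW_iff_isIso_map F s).2 ((isZero_map_obj₁_iff_isIso_map_mor₂ F hT).1 hK),
      ?_⟩
    have hhs : h ≫ s = 0 := comp_distTriang_mor_zero₁₂ _ hT
    rw [Category.assoc, hhs, Limits.comp_zero]

lemma objectiveFunctor_iff_forall_exists_kerW [F.Additive] :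
    ObjectiveFunctor F ↔ ∀ ⦃X Y : 𝒜⦄ (f g : X ⟶ Y), F.map f = F.map g →
      ∃ (Z : 𝒜) (s : Y ⟶ Z), kerW F s ∧ f ≫ s = g ≫ s := by
  constructor
  · intro hF X Y f g hfg
    obtain ⟨Z, s, hs, hfgs⟩ := (exists_kerW_comp_eq_zero_iff F (f - g)).2
      (hF _ (by rw [F.map_sub, hfg, sub_self]))
    exact ⟨Z, s, hs, by rwa [Preadditive.sub_comp, sub_eq_zero] at hfgs⟩
  · intro hF X Y f hf
    obtain ⟨Z, s, hs, hfs⟩ := hF f 0 (by rw [hf, F.map_zero])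
    exact (exists_kerW_comp_eq_zero_iff F f).1 ⟨Z, s, hs, by rw [hfs, Limits.zero_comp]⟩

lemma condWSM_of_objectiveFunctor (hF : ObjectiveFunctor F) : CondWSM F := by
  intro X Y u hu
  obtain ⟨W, w, v, hT⟩ := distinguished_cocone_triangle₁ u
  have hw : F.map w = 0 :=
    Triangle.mor₁_eq_zero_of_mono₂ _ (F.map_distinguished _ hT) (inferInstanceAs (Mono (F.map u)))
  obtain ⟨X', s, hs, hws⟩ := (exists_kerW_comp_eq_zero_iff F w).2 (hF w hw)
  obtain ⟨u', rfl⟩ : ∃ u' : Y ⟶ X', s = u ≫ u' := Triangle.yoneda_exact₂ _ hT s hws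
  exact ⟨X', u', (kerW_iff_isIso_map F _).1 hs⟩

lemma objectiveFunctor_of_condWSM (hF : CondWSM F) : ObjectiveFunctor F := by
  intro X Y f hf
  obtain ⟨Z, g, h, hT⟩ := distinguished_cocone_triangle f
  have hFg : IsSplitMono (F.map g) := by
    obtain ⟨r, hr⟩ : ∃ r : F.obj Z ⟶ F.obj Y, 𝟙 (F.obj Y) = F.map g ≫ r :=
      Triangle.yoneda_exact₂ _ (F.map_distinguished _ hT) (𝟙 (F.obj Y))
        (show F.map f ≫ 𝟙 (F.obj Y) = 0 by rw [hf, Limits.zero_comp])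
    exact IsSplitMono.mk' ⟨r, hr.symm⟩
  obtain ⟨X', u', hu'⟩ := hF g hFg
  have hfg : f ≫ g = 0 := comp_distTriang_mor_zero₁₂ _ hT
  exact (exists_kerW_comp_eq_zero_iff F f).1 ⟨X', g ≫ u', (kerW_iff_isIso_map F _).2 hu',
    by rw [← Category.assoc, hfg, Limits.zero_comp]⟩

end TriangleFunctor

/-- Theorem [RZ2, 1.1]. Let `F : 𝒜 → ℬ` be a triangle functor,
`V : 𝒜 → 𝒜/Ker F` the Verdier quotient functor (i.e. a localization of `𝒜` at the class
of morphisms whose cone is killed by `F`), and `F̃` the induced functor with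
`F = F̃ ∘ V`.  Then the following are equivalent: (1) `F` is objective; (2) `F`
satisfies (WSM); (3) `F̃` is faithful. -/
theorem stmt11
    {𝒜 : Type u} [Category.{v} 𝒜] [HasZeroObject 𝒜] [Preadditive 𝒜] [HasShift 𝒜 ℤ]
    [∀ n : ℤ, (CategoryTheory.shiftFunctor 𝒜 n).Additive] [Pretriangulated 𝒜]
    {ℬ : Type u'} [Category.{v'} ℬ] [HasZeroObject ℬ] [Preadditive ℬ] [HasShift ℬ ℤ]
    [∀ n : ℤ, (CategoryTheory.shiftFunctor ℬ n).Additive] [Pretriangulated ℬ]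
    (F : 𝒜 ⥤ ℬ) [F.Additive] [F.CommShift ℤ] [F.IsTriangulated]
    {𝒟 : Type u''} [Category.{v''} 𝒟]
    (V : 𝒜 ⥤ 𝒟) [V.IsLocalization (kerW F)]
    (Ftilde : 𝒟 ⥤ ℬ) (hFtilde : V ⋙ Ftilde = F) :
    List.TFAE [ObjectiveFunctor F, CondWSM F, Ftilde.Faithful] := by
  subst hFtilde
  tfae_have 1 → 2 := condWSM_of_objectiveFunctor _
  tfae_have 2 → 1 := objectiveFunctor_of_condWSM _
  tfae_have 1 ↔ 3 := by
    rw [objectiveFunctor_iff_forall_exists_kerW,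
      Localization.faithful_iff_forall_map_eq_map V (kerW (V ⋙ Ftilde))]
    simp only [MorphismProperty.map_eq_iff_postcomp V (kerW (V ⋙ Ftilde)), exists_prop]
    rfl
  tfae_finish
end

section
/- Let F : 𝒜 → ℬ be a triangle functor between triangulated categories and V_F : 𝒜 → 𝒜/Ker F the Verdier quotient functor. Then: (1) if V_F is full, then F satisfies condition (I); (2) if moreover F is objective, or if 𝒜 is a Fitting category, then V_F is full if and only if F satisfies condition (I). -/
universe v u v' u' v'' u''

open CategoryTheory Limits Pretriangulated

/-!
The morphisms with cone in `Ker F` are exactly those inverted by `F`, and they admit a calculus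
of left fractions, so `V_F` is full once `V_F(s)⁻¹` lies in the image of `V_F` for each of them.
If `V_F` is full, applying `F`, which factors through `V_F`, to a preimage of `V_F(u)⁻¹` gives (I).
Conversely, (I) gives `s'` with `F(s' ≫ s) = 1`, and `V_F(s)⁻¹ = V_F(x ≫ s')` as soon as
`e = s' ≫ s` satisfies `x ≫ e ≫ t = t` for some `x` and some `t` inverted by `F`. If `F` is
objective, `e - 1` factors through `Ker F`, hence is killed by the next map `t` of a triangle on
that factorisation, and `x = 1` works. In a Fitting category `F(e) = 1` is nilpotent on the
nilpotent summand of `e`, which therefore lies in `Ker F`; so the projection `t` onto the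
automorphism summand is inverted by `F`, and `x` inverts `e` there.
-/

namespace CategoryTheory

section Localization

variable {C D E : Type*} [Category C] [Category D] [Category E]

lemma MorphismProperty.IsInvertedBy.map_eq_of_map_eq {W : MorphismProperty C} {F : C ⥤ E}
    (hF : W.IsInvertedBy F) (L : C ⥤ D) [L.IsLocalization W] {X Y : C} {f g : X ⟶ Y}
    (h : L.map f = L.map g) : F.map f = F.map g := by
  have e := Localization.fac F hF L
  rw [← NatIso.naturality_1 e f, ← NatIso.naturality_1 e g, Functor.comp_map,
    Functor.comp_map, h]

lemma Localization.full_of_exists_map_comp_eq_id (L : C ⥤ D) (W : MorphismProperty C)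
    [L.IsLocalization W] [W.HasLeftCalculusOfFractions]
    (h : ∀ ⦃X Y : C⦄ (s : X ⟶ Y), W s → ∃ r : Y ⟶ X, L.map (r ≫ s) = 𝟙 _) : L.Full where
  map_surjective {X Y} φ := by
    obtain ⟨φ, rfl⟩ := Localization.exists_leftFraction L W φ
    obtain ⟨r, hr⟩ := h φ.s φ.hs
    refine ⟨φ.f ≫ r, ?_⟩
    rw [← cancel_mono (L.map φ.s), MorphismProperty.LeftFraction.map_comp_map_s,
      L.map_comp, Category.assoc, ← L.map_comp, hr, Category.comp_id]

end Localization

section Fitting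

variable {𝒜 : Type u} [Category.{v} 𝒜] {ℬ : Type u'} [Category.{v'} ℬ]

lemma Functor.map_compPow (F : 𝒜 ⥤ ℬ) {X : 𝒜} (f : X ⟶ X) (n : ℕ) :
    F.map (compPow 𝒜 f n) = compPow ℬ (F.map f) n := by
  induction n with
  | zero => simp [compPow]
  | succ n ih => simp [compPow, ih]

lemma compPow_id (X : 𝒜) (n : ℕ) : compPow 𝒜 (𝟙 X) n = 𝟙 X := by
  induction n with
  | zero => rfl
  | succ n ih => simp [compPow, ih]

lemma IsFittingCategory.exists_isIso_map_comp_eq [Preadditive 𝒜] [Preadditive ℬ]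
    (h𝒜 : IsFittingCategory 𝒜) (F : 𝒜 ⥤ ℬ) [F.Additive] {Y : 𝒜} (e : Y ⟶ Y)
    (he : F.map e = 𝟙 _) :
    ∃ (Z : 𝒜) (t : Y ⟶ Z) (x : Y ⟶ Y), IsIso (F.map t) ∧ x ≫ e ≫ t = t := by
  obtain ⟨Z', Z'', i', p', i'', p'', hi'p', hi''p'', -, -, hsum, -, -, ha', n, hnil⟩ := h𝒜 Y e
  have hZ'' : IsZero (F.obj Z'') := by
    have hid : F.map (i'' ≫ e ≫ p'') = 𝟙 _ := by
      rw [F.map_comp, F.map_comp, he, Category.id_comp, ← F.map_comp, hi''p'', F.map_id]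
    rw [IsZero.iff_id_eq_zero, ← compPow_id _ (n + 1), ← hid, ← F.map_compPow, hnil,
      F.map_zero]
  have hFp'i' : F.map p' ≫ F.map i' = 𝟙 _ := by
    simpa [hZ''.eq_of_tgt (F.map p'') 0] using congrArg F.map hsum
  have hFi'p' : F.map i' ≫ F.map p' = 𝟙 _ := by rw [← F.map_comp, hi'p', F.map_id]
  refine ⟨Z', p', p' ≫ inv (i' ≫ e ≫ p') ≫ i', ⟨F.map i', hFp'i', hFi'p'⟩, ?_⟩
  simp only [Category.assoc, IsIso.inv_hom_id, Category.comp_id]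

end Fitting

end CategoryTheory

section Triangulated

variable {𝒜 : Type u} [Category.{v} 𝒜] [HasZeroObject 𝒜] [Preadditive 𝒜] [HasShift 𝒜 ℤ]
  [∀ n : ℤ, (shiftFunctor 𝒜 n).Additive] [Pretriangulated 𝒜]
  {ℬ : Type u'} [Category.{v'} ℬ] [HasZeroObject ℬ] [Preadditive ℬ] [HasShift ℬ ℤ]
  [∀ n : ℤ, (shiftFunctor ℬ n).Additive] [Pretriangulated ℬ]
  (F : 𝒜 ⥤ ℬ) [F.CommShift ℤ] [F.IsTriangulated]

lemma kerW_iff_isIso {X Y : 𝒜} (u : X ⟶ Y) : kerW F u ↔ IsIso (F.map u) := by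
  constructor
  · rintro ⟨Z, g, h, hT, hZ⟩
    exact (Triangle.isZero₃_iff_isIso₁ _ (F.map_distinguished _ hT)).1 hZ
  · intro hu
    obtain ⟨Z, g, h, hT⟩ := distinguished_cocone_triangle u
    exact ⟨Z, g, h, hT, (Triangle.isZero₃_iff_isIso₁ _ (F.map_distinguished _ hT)).2 hu⟩

lemma kerW_isInvertedBy : (kerW F).IsInvertedBy F :=
  fun _ _ u hu => (kerW_iff_isIso F u).1 hu

instance : (kerW F).IsMultiplicative where
  id_mem X := (kerW_iff_isIso F _).2 (by rw [F.map_id]; infer_instance)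
  comp_mem f g hf hg := by
    rw [kerW_iff_isIso] at hf hg ⊢
    rw [F.map_comp]
    infer_instance

-- Mathlib's instance for `ObjectProperty.trW` assumes `IsTriangulated 𝒜`; this needs only the
-- pretriangulated axioms.
instance : (kerW F).HasLeftCalculusOfFractions where
  exists_leftFraction X Y φ := by
    obtain ⟨Z, f, g, H, mem⟩ := φ.hs
    obtain ⟨Y', s', f', mem'⟩ := distinguished_cocone_triangle₂ (g ≫ φ.f⟦1⟧')
    obtain ⟨b, hb, -⟩ :=
      complete_distinguished_triangle_morphism₂ _ _ H mem' φ.f (𝟙 Z) (Category.id_comp _).symm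
    exact ⟨MorphismProperty.LeftFraction.mk b s' ⟨_, _, _, mem', mem⟩, hb.symm⟩
  ext := by
    rintro X' X Y f₁ f₂ s ⟨Z, g, h, H, mem⟩ hf₁
    have hs : s ≫ (f₁ - f₂) = 0 := by rw [Preadditive.comp_sub, hf₁, sub_self]
    obtain ⟨q, hq⟩ : ∃ q : Z ⟶ Y, f₁ - f₂ = g ≫ q := Triangle.yoneda_exact₂ _ H _ hs
    obtain ⟨Y', r, t, mem'⟩ := distinguished_cocone_triangle q
    have hZ : IsZero (F.obj (Z⟦(1 : ℤ)⟧)) :=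
      ((shiftFunctor ℬ (1 : ℤ)).map_isZero mem).of_iso ((F.commShiftIso (1 : ℤ)).app Z)
    refine ⟨Y', r, ⟨_, _, _, rot_of_distTriang _ mem', hZ⟩, ?_⟩
    have hqr : q ≫ r = 0 := comp_distTriang_mor_zero₁₂ _ mem'
    rw [← sub_eq_zero, ← Preadditive.sub_comp, hq, Category.assoc, hqr, comp_zero]

lemma ObjectiveFunctor.exists_isIso_map_comp_eq_zero (hF : ObjectiveFunctor F) {X Y : 𝒜}
    (f : X ⟶ Y) (hf : F.map f = 0) : ∃ (Z : 𝒜) (t : Y ⟶ Z), IsIso (F.map t) ∧ f ≫ t = 0 := by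
  obtain ⟨K, g, h, hK, rfl⟩ := hF f hf
  obtain ⟨Z, t, w, hT⟩ := distinguished_cocone_triangle h
  have hht : h ≫ t = 0 := comp_distTriang_mor_zero₁₂ _ hT
  exact ⟨Z, t, (Triangle.isZero₁_iff_isIso₂ _ (F.map_distinguished _ hT)).1 hK,
    by rw [Category.assoc, hht, comp_zero]⟩

variable {𝒟 : Type u''} [Category.{v''} 𝒟] (V : 𝒜 ⥤ 𝒟) [V.IsLocalization (kerW F)]

lemma condI_of_full [V.Full] : CondI F := by
  intro X Y u hu
  have := Localization.inverts V (kerW F) u ((kerW_iff_isIso F u).2 hu)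
  obtain ⟨u', hu'⟩ := V.map_surjective (inv (V.map u))
  refine ⟨u', IsIso.eq_inv_of_hom_inv_id ?_⟩
  rw [← F.map_comp, ← F.map_id]
  apply (kerW_isInvertedBy F).map_eq_of_map_eq V
  rw [V.map_comp, hu', IsIso.hom_inv_id, V.map_id]

lemma full_of_condI (hI : CondI F)
    (h : ∀ ⦃Y : 𝒜⦄ (e : Y ⟶ Y), F.map e = 𝟙 _ →
      ∃ (Z : 𝒜) (t : Y ⟶ Z) (x : Y ⟶ Y), IsIso (F.map t) ∧ x ≫ e ≫ t = t) :
    V.Full := by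
  refine Localization.full_of_exists_map_comp_eq_id V (kerW F) fun X Y s hs => ?_
  obtain ⟨s', hs'⟩ := hI s ((kerW_iff_isIso F s).1 hs)
  obtain ⟨Z, t, x, ht, hxt⟩ := h (s' ≫ s) (by rw [F.map_comp, hs', IsIso.inv_hom_id])
  have := Localization.inverts V (kerW F) t ((kerW_iff_isIso F t).2 ht)
  refine ⟨x ≫ s', ?_⟩
  rw [← cancel_mono (V.map t), ← V.map_comp, Category.id_comp]
  simpa only [Category.assoc] using congrArg V.map hxt

end Triangulated

/-- Theorem [RZ2, 1.2]. Let `F : 𝒜 → ℬ` be a triangle functor and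
`V : 𝒜 → 𝒜/Ker F` the Verdier quotient functor.  (1) If `V` is full then `F` satisfies
condition (I).  (2) If `F` is objective, or if `𝒜` is a Fitting category, then `V` is
full iff `F` satisfies condition (I). -/
theorem stmt12
    {𝒜 : Type u} [Category.{v} 𝒜] [HasZeroObject 𝒜] [Preadditive 𝒜] [HasShift 𝒜 ℤ]
    [∀ n : ℤ, (CategoryTheory.shiftFunctor 𝒜 n).Additive] [Pretriangulated 𝒜]
    {ℬ : Type u'} [Category.{v'} ℬ] [HasZeroObject ℬ] [Preadditive ℬ] [HasShift ℬ ℤ]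
    [∀ n : ℤ, (CategoryTheory.shiftFunctor ℬ n).Additive] [Pretriangulated ℬ]
    (F : 𝒜 ⥤ ℬ) [F.Additive] [F.CommShift ℤ] [F.IsTriangulated]
    {𝒟 : Type u''} [Category.{v''} 𝒟]
    (V : 𝒜 ⥤ 𝒟) [V.IsLocalization (kerW F)] :
    (V.Full → CondI F) ∧
    ((ObjectiveFunctor F ∨ IsFittingCategory 𝒜) → (V.Full ↔ CondI F)) := by
  have hfull : V.Full → CondI F := fun _ => condI_of_full F V
  refine ⟨hfull, fun hcase => ⟨hfull, fun hI => full_of_condI F V hI fun Y e he => ?_⟩⟩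
  rcases hcase with hF | h𝒜
  · obtain ⟨Z, t, ht, het⟩ :=
      hF.exists_isIso_map_comp_eq_zero F (e - 𝟙 Y) (by rw [F.map_sub, he, F.map_id, sub_self])
    refine ⟨Z, t, 𝟙 Y, ht, ?_⟩
    rwa [Preadditive.sub_comp, Category.id_comp, sub_eq_zero, ← Category.id_comp (e ≫ t)] at het
  · exact h𝒜.exists_isIso_map_comp_eq F e he
end

section
/- Every full triangle functor F : 𝒜 → ℬ between triangulated categories is objective: every morphism f : X → Y in 𝒜 with F(f) = 0 factors through an object K of 𝒜 with F(K) ≅ 0. -/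
universe v u v' u' v'' u''

open CategoryTheory Limits Pretriangulated

/-!
If `F f = 0` for `f : X ⟶ Y` and `X ⟶ Y ⟶ Z ⟶ X⟦1⟧` is distinguished, then `F` of the second
morphism `Y ⟶ Z` is a split mono; by fullness its retraction lifts, giving an endomorphism `e`
of `Y` with `f ≫ e = 0` and `F e = 𝟙`. Then `f` factors through the fiber `K ⟶ Y` of `e`,
and `F K = 0` because `F` sends the triangle `K ⟶ Y ⟶ Y ⟶ K⟦1⟧` to one whose second
morphism is an isomorphism.
-/

namespace CategoryTheory.Functor

variable {𝒜 : Type u} [Category.{v} 𝒜] [HasZeroObject 𝒜] [Preadditive 𝒜] [HasShift 𝒜 ℤ]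
  [∀ n : ℤ, (shiftFunctor 𝒜 n).Additive] [Pretriangulated 𝒜]
  {ℬ : Type u'} [Category.{v'} ℬ] [HasZeroObject ℬ] [Preadditive ℬ] [HasShift ℬ ℤ]
  [∀ n : ℤ, (shiftFunctor ℬ n).Additive] [Pretriangulated ℬ]
  (F : 𝒜 ⥤ ℬ) [F.CommShift ℤ] [F.IsTriangulated]

lemma exists_factorization_through_isZero_obj_of_comp_eq_zero {X Y Y' : 𝒜} (f : X ⟶ Y)
    (e : Y ⟶ Y') (hfe : f ≫ e = 0) [IsIso (F.map e)] :
    ∃ (K : 𝒜) (g : X ⟶ K) (h : K ⟶ Y), IsZero (F.obj K) ∧ g ≫ h = f := by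
  obtain ⟨K, k, δ, hT⟩ := distinguished_cocone_triangle₁ e
  obtain ⟨g, hg⟩ := Triangle.coyoneda_exact₂ _ hT f hfe
  have hK : IsZero (F.obj K) :=
    Triangle.isZero₁_of_isIso₂ _ (F.map_distinguished _ hT) (inferInstanceAs (IsIso (F.map e)))
  exact ⟨K, g, k, hK, hg.symm⟩

lemma exists_comp_eq_zero_and_map_eq_id_of_map_eq_zero [F.Full] {X Y : 𝒜} (f : X ⟶ Y)
    (hf : F.map f = 0) : ∃ e : Y ⟶ Y, f ≫ e = 0 ∧ F.map e = 𝟙 (F.obj Y) := by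
  obtain ⟨Z, g, δ, hT⟩ := distinguished_cocone_triangle f
  have : Mono (F.map g) := Triangle.mono₂ _ (F.map_distinguished _ hT) hf
  have : IsSplitMono (F.map g) := isSplitMono_of_mono _
  refine ⟨g ≫ F.preimage (retraction (F.map g)), ?_, ?_⟩
  · have hfg : f ≫ g = 0 := comp_distTriang_mor_zero₁₂ _ hT
    rw [← Category.assoc, hfg, zero_comp]
  · rw [F.map_comp, F.map_preimage, IsSplitMono.id]

end CategoryTheory.Functor

/-- [RZ2, 4.4]. Every full triangle functor is objective. -/
theorem stmt14
    {𝒜 : Type u} [Category.{v} 𝒜] [HasZeroObject 𝒜] [Preadditive 𝒜] [HasShift 𝒜 ℤ]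
    [∀ n : ℤ, (CategoryTheory.shiftFunctor 𝒜 n).Additive] [Pretriangulated 𝒜]
    {ℬ : Type u'} [Category.{v'} ℬ] [HasZeroObject ℬ] [Preadditive ℬ] [HasShift ℬ ℤ]
    [∀ n : ℤ, (CategoryTheory.shiftFunctor ℬ n).Additive] [Pretriangulated ℬ]
    (F : 𝒜 ⥤ ℬ) [F.Additive] [F.CommShift ℤ] [F.IsTriangulated] [F.Full] :
    ObjectiveFunctor F := by
  intro X Y f hf
  obtain ⟨e, hfe, he⟩ := F.exists_comp_eq_zero_and_map_eq_id_of_map_eq_zero f hf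
  have : IsIso (F.map e) := he ▸ inferInstance
  exact F.exists_factorization_through_isZero_obj_of_comp_eq_zero f e hfe
end
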